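/- arXiv:2410.16334 — 5 statements merged into one kernel-verified Lean document; each statement's English description precedes it below -/
import Mathlib

section
/- The exponential generating function identity holds: ∑_{n=0}^∞ t(n)·z^n/n! = exp(z + z²/2), where t(n) is the number of involutions of an n-element set; equivalently, as formal power series, the coefficientwise identity holds. -/
/-- The number of involutions of `Fin n`. -/
noncomputable def involCount (n : ℕ) : ℕ := Nat.card {σ : Equiv.Perm (Fin n) // σ * σ = 1}

/-!
An involution of a set with `n + 2` elements either fixes a chosen point `x`, or exchanges it
with one of the other `n + 1` points; multiplying by the transposition `(x a)` identifies the
involutions with `x ↦ a` with the involutions of the remaining `n` points. Hence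
`t(n + 2) = t(n + 1) + (n + 1) t(n)`, i.e. the exponential generating function `F` solves the
formal differential equation `F' = (1 + X) F` with `F(0) = 1`. So does `exp(X) · exp(X²/2)`, and
this equation has at most one solution with given constant term.
-/

theorem Equiv.swap_mul_mul_swap_mul_eq_one {α : Type*} [DecidableEq α] {σ : Perm α} {x a : α}
    (h : σ * σ = 1) (hs : swap (σ x) (σ a) = swap x a) : swap x a * σ * (swap x a * σ) = 1 := by
  rw [← mul_assoc, mul_assoc _ σ, mul_swap_eq_swap_mul, hs, ← mul_assoc, swap_mul_self, one_mul,
    h]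

abbrev Involution (α : Type*) := {σ : Equiv.Perm α // σ * σ = 1}

namespace Involution

open Equiv Finset

variable {α β : Type*}

theorem apply_apply (σ : Involution α) (x : α) : σ.1 (σ.1 x) = x := by
  rw [← Perm.mul_apply, σ.2, Perm.one_apply]

theorem apply_eq_of_apply_eq (σ : Involution α) {x a : α} (h : σ.1 x = a) : σ.1 a = x :=
  h ▸ apply_apply σ x

def congr (e : α ≃ β) : Involution α ≃ Involution β :=
  (permCongrHom e).toEquiv.subtypeEquiv fun σ => by
    rw [MulEquiv.toEquiv_eq_coe, MulEquiv.coe_toEquiv, ← map_mul, MulEquiv.map_eq_one_iff]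

theorem card_eq_involCount [Finite α] : Nat.card (Involution α) = involCount (Nat.card α) :=
  Nat.card_congr (congr (Finite.equivFin α))

theorem card_eq_sum_card_apply_eq [Fintype α] (x : α) :
    Nat.card (Involution α) = ∑ a, Nat.card {σ : Involution α // σ.1 x = a} := by
  rw [← Nat.card_congr (sigmaFiberEquiv fun σ : Involution α => σ.1 x), Nat.card_sigma]

variable [DecidableEq α]

def fixingEquiv (s : Finset α) :
    {σ : Involution α // ∀ a ∈ s, σ.1 a = a} ≃ Involution {a // a ∉ s} :=
  calc {σ : Involution α // ∀ a ∈ s, σ.1 a = a}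
      ≃ {σ : Perm α // σ * σ = 1 ∧ ∀ a ∈ s, σ a = a} :=
        subtypeSubtypeEquivSubtypeInter (fun σ : Perm α => σ * σ = 1) (fun σ => ∀ a ∈ s, σ a = a)
    _ ≃ {σ : Perm α // (∀ a, ¬a ∉ s → σ a = a) ∧ σ * σ = 1} :=
        subtypeEquivRight fun σ => by simp only [not_not]; exact and_comm
    _ ≃ {σ : {σ : Perm α // ∀ a, ¬a ∉ s → σ a = a} // σ.1 * σ.1 = 1} :=
        (subtypeSubtypeEquivSubtypeInter _ (fun σ : Perm α => σ * σ = 1)).symm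
    _ ≃ Involution {a // a ∉ s} :=
        ((Perm.subtypeEquivSubtypePerm (· ∉ s)).subtypeEquiv fun σ => by
          rw [Perm.subtypeEquivSubtypePerm_apply_coe, ← map_mul,
            map_eq_one_iff _ Perm.ofSubtype_injective]).symm

def mapsToEquiv (x a : α) :
    {σ : Involution α // σ.1 x = a} ≃ {σ : Involution α // ∀ y ∈ ({x, a} : Finset α), σ.1 y = y}
    where
  toFun σ :=
    have hax : σ.1.1 a = x := apply_eq_of_apply_eq σ.1 σ.2
    ⟨⟨swap x a * σ.1.1, swap_mul_mul_swap_mul_eq_one σ.1.2 (by rw [σ.2, hax, swap_comm])⟩,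
      by simp [σ.2, hax]⟩
  invFun τ :=
    have hx : τ.1.1 x = x := τ.2 x (by simp)
    have ha : τ.1.1 a = a := τ.2 a (by simp)
    ⟨⟨swap x a * τ.1.1, swap_mul_mul_swap_mul_eq_one τ.1.2 (by rw [hx, ha])⟩, by simp [hx]⟩
  left_inv σ := by simp [swap_mul_self_mul]
  right_inv τ := by simp [swap_mul_self_mul]

theorem card_apply_eq [Fintype α] (x a : α) :
    Nat.card {σ : Involution α // σ.1 x = a} = involCount (Fintype.card α - #{x, a}) := by
  rw [Nat.card_congr ((mapsToEquiv x a).trans (fixingEquiv _)), card_eq_involCount,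
    Nat.card_eq_fintype_card, Fintype.card_subtype_compl, Fintype.card_coe]

end Involution

theorem involCount_zero : involCount 0 = 1 :=
  Nat.card_eq_one_iff_unique.mpr ⟨inferInstance, ⟨1, mul_one 1⟩⟩

theorem involCount_one : involCount 1 = 1 :=
  Nat.card_eq_one_iff_unique.mpr ⟨inferInstance, ⟨1, mul_one 1⟩⟩

open Finset in
theorem involCount_add_two (n : ℕ) :
    involCount (n + 2) = involCount (n + 1) + (n + 1) * involCount n := by
  rw [involCount, Involution.card_eq_sum_card_apply_eq 0, ← add_sum_erase _ _ (mem_univ 0)]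
  simp only [Involution.card_apply_eq, Fintype.card_fin]
  rw [insert_eq_of_mem (mem_singleton_self _), card_singleton,
    sum_congr rfl fun a ha => by rw [card_pair (ne_of_mem_erase ha).symm], sum_const,
    card_erase_of_mem (mem_univ _), card_univ, Fintype.card_fin, smul_eq_mul]
  rfl

open PowerSeries Nat

theorem PowerSeries.eq_of_derivative_eq_mul_self {R : Type*} [CommRing R] [IsAddTorsionFree R]
    {p f g : R⟦X⟧} (hf : d⁄dX R f = p * f) (hg : d⁄dX R g = p * g)
    (h0 : constantCoeff f = constantCoeff g) : f = g := by
  ext n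
  induction n using Nat.strong_induction_on with
  | _ n ih =>
    rcases n with _ | n
    · simpa using h0
    have hn : coeff n (d⁄dX R f) = coeff n (d⁄dX R g) := by
      rw [hf, hg, coeff_mul, coeff_mul]
      exact Finset.sum_congr rfl fun ij hij => by
        rw [ih ij.2 (lt_succ_of_le (Finset.HasAntidiagonal.antidiagonal.snd_le hij))]
    rw [coeff_derivative, coeff_derivative, mul_comm, mul_comm _ (_ + 1), ← cast_succ,
      ← nsmul_eq_mul, ← nsmul_eq_mul] at hn
    exact nsmul_right_injective n.succ_ne_zero hn

section

variable (K : Type*) [Field K]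

noncomputable def expHalfSq : K⟦X⟧ :=
  mk fun n => if n % 2 = 0 then 1 / (2 ^ (n / 2) * ((n / 2)! : K)) else 0

theorem derivative_expHalfSq [CharZero K] : d⁄dX K (expHalfSq K) = X * expHalfSq K := by
  ext n
  rw [coeff_derivative]
  rcases n with _ | n
  · simp [expHalfSq]
  rw [coeff_succ_X_mul, expHalfSq, coeff_mk, coeff_mk]
  obtain ⟨j, rfl | rfl⟩ := n.even_or_odd'
  · have h0 : (2 * j + 1 + 1) % 2 = 0 := by omega
    have h1 : (2 * j + 1 + 1) / 2 = j + 1 := by omega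
    simp only [h0, h1, Nat.mul_mod_right, Nat.mul_div_cancel_left _ two_pos, if_true]
    push_cast [factorial_succ]
    field_simp
    ring
  · have h1 : (2 * j + 1 + 1 + 1) % 2 = 1 := by omega
    simp [h1]

end

theorem derivative_involCount_egf :
    d⁄dX ℚ (mk fun n => (involCount n : ℚ) / n !) =
      (1 + X) * mk fun n => (involCount n : ℚ) / n ! := by
  ext n
  rw [coeff_derivative, add_mul, one_mul, map_add, coeff_mk, coeff_mk]
  rcases n with _ | n
  · simp [involCount_one, involCount_zero]
  rw [coeff_succ_X_mul, coeff_mk, involCount_add_two]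
  push_cast [factorial_succ]
  field_simp

/-- The exponential generating function identity
`∑ t(n) zⁿ/n! = exp(z + z²/2) = exp(z) · exp(z²/2)`, as formal power series over `ℚ`.
The second factor `exp(z²/2)` has coefficients `1/(2^m · m!)` at `z^{2m}` and `0` at odd
powers. -/
theorem involution_egf :
    PowerSeries.mk (fun n => (involCount n : ℚ) / Nat.factorial n) =
      PowerSeries.exp ℚ *
        PowerSeries.mk (fun n =>
          if n % 2 = 0 then 1 / (2 ^ (n / 2) * (Nat.factorial (n / 2) : ℚ)) else 0) := by
  refine eq_of_derivative_eq_mul_self derivative_involCount_egf ?_ ?_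
  · change d⁄dX ℚ (exp ℚ * expHalfSq ℚ) = (1 + X) * (exp ℚ * expHalfSq ℚ)
    rw [Derivation.leibniz, derivative_exp, derivative_expHalfSq, smul_eq_mul, smul_eq_mul]
    ring
  · simp [involCount_zero]
end

section
/- The binomial-sum identity t(n) = ∑_{k=0}^{⌊n/2⌋} C(n, 2k) · (2k)!/(2^k · k!) holds for all n, where t satisfies t(0)=t(1)=1 and t(n+2)=t(n+1)+(n+1)·t(n). -/
/-!
Both sides satisfy the same two-step recurrence with the same initial values. For the sum,
`(2k)!/(2^k k!) = (2k-1)‼` and Pascal's rule `C(n+2, 2k+2) = C(n+1, 2k+2) + C(n+1, 2k+1)`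
split the `(k+1)`-th term for `n+2` into the `(k+1)`-th term for `n+1` plus
`C(n+1, 2k+1) · (2k+1)‼ = (n+1) · C(n, 2k) · (2k-1)‼`, which is `(n+1)` times the `k`-th term
for `n`.
-/

open Nat Finset

lemma factorial_two_mul_div (k : ℕ) : (2 * k)! / (2 ^ k * k !) = (2 * k - 1)‼ := by
  cases k with
  | zero => simp
  | succ k =>
    have h : (2 * (k + 1))! = 2 ^ (k + 1) * (k + 1)! * (2 * k + 1)‼ := by
      rw [show 2 * (k + 1) = 2 * k + 1 + 1 by ring, factorial_eq_mul_doubleFactorial,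
        show 2 * k + 1 + 1 = 2 * (k + 1) by ring, doubleFactorial_two_mul]
    rw [h, Nat.mul_div_cancel_left _ (by positivity)]
    rfl

/-- The `k`-th term counts the involutions of an `n`-element set with exactly `k` two-cycles:
choose their `2k` points, then a perfect matching of them. -/
def involutionTerm (n k : ℕ) : ℕ := n.choose (2 * k) * (2 * k - 1)‼

lemma involutionTerm_zero_right (n : ℕ) : involutionTerm n 0 = 1 := by
  simp [involutionTerm]

lemma involutionTerm_eq_zero {n k : ℕ} (h : n / 2 < k) : involutionTerm n k = 0 := by
  simp [involutionTerm, choose_eq_zero_of_lt (show n < 2 * k by omega)]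

lemma involutionTerm_add_two_succ (n k : ℕ) :
    involutionTerm (n + 2) (k + 1) =
      involutionTerm (n + 1) (k + 1) + (n + 1) * involutionTerm n k := by
  have pascal : (n + 2).choose (2 * (k + 1)) =
      (n + 1).choose (2 * (k + 1)) + (n + 1).choose (2 * k + 1) := by
    rw [show 2 * (k + 1) = 2 * k + 1 + 1 by ring, choose_succ_succ, add_comm]
  have absorb : (n + 1).choose (2 * k + 1) * (2 * k + 1) = (n + 1) * n.choose (2 * k) :=
    (add_one_mul_choose_eq n (2 * k)).symm
  have hdf : (2 * (k + 1) - 1)‼ = (2 * k + 1) * (2 * k - 1)‼ := doubleFactorial_add_one (2 * k)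
  unfold involutionTerm
  rw [pascal, hdf, add_mul, ← mul_assoc ((n + 1).choose (2 * k + 1)), absorb, mul_assoc]

def involutionCount (n : ℕ) : ℕ := ∑ k ∈ range (n / 2 + 1), involutionTerm n k

lemma sum_range_involutionTerm {n N : ℕ} (h : n / 2 < N) :
    ∑ k ∈ range N, involutionTerm n k = involutionCount n :=
  eventually_constant_sum (fun _ hk => involutionTerm_eq_zero hk) h

lemma involutionCount_zero : involutionCount 0 = 1 := rfl

lemma involutionCount_one : involutionCount 1 = 1 := rfl

lemma involutionCount_add_two (n : ℕ) :
    involutionCount (n + 2) = involutionCount (n + 1) + (n + 1) * involutionCount n := by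
  rw [← sum_range_involutionTerm (n := n + 2) (N := n + 3) (by omega),
    ← sum_range_involutionTerm (n := n + 1) (N := n + 3) (by omega),
    ← sum_range_involutionTerm (n := n) (N := n + 2) (by omega),
    sum_range_succ' _ (n + 2), sum_range_succ' (involutionTerm (n + 1)) (n + 2)]
  simp only [involutionTerm_add_two_succ, sum_add_distrib, mul_sum, involutionTerm_zero_right]
  ring

theorem involution_binomial_sum (t : ℕ → ℕ)
    (h0 : t 0 = 1) (h1 : t 1 = 1)
    (hrec : ∀ n : ℕ, t (n + 2) = t (n + 1) + (n + 1) * t n) :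
    ∀ n : ℕ, t n =
      ∑ k ∈ Finset.range (n / 2 + 1),
        Nat.choose n (2 * k) * (Nat.factorial (2 * k) / (2 ^ k * Nat.factorial k)) := by
  intro n
  simp only [factorial_two_mul_div]
  change t n = involutionCount n
  induction n using Nat.twoStepInduction with
  | zero => rw [h0, involutionCount_zero]
  | one => rw [h1, involutionCount_one]
  | more n ih ih' => rw [hrec, ih, ih', involutionCount_add_two]
end

section
/- The polynomial identity ∑_{k=0}^{⌊n/2⌋} n!/((n-2k)!·2^k·k!) · x^{n-2k} equals the Hermite-type polynomial H_n(x) defined by H_0 = 1, H_1(x) = x, H_{n+2}(x) = x·H_{n+1}(x) + (n+1)·H_n(x); in particular t(n) = H_n(1). -/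
open Polynomial

/-!
The coefficient `a n k := signlessHermiteCoeff n k = C(n, 2k) · (2k-1)‼` counts the `k`-edge matchings of `Kₙ`. It obeys
`a (n+2) (k+1) = a (n+1) (k+1) + (n+1) · a n k` (Pascal's rule and
`(2k+1) · C(n+1, 2k+1) = (n+1) · C(n, 2k)`), which is the recurrence of `Hₙ` read off
coefficientwise, and `a n k · (n-2k)! · 2ᵏ · k! = n!` gives the factorial form.
An involution is a permutation whose cycles all have length 2, and by the cycle-type count the
permutations of `Fin n` of cycle type `2ᵏ` number `n! / ((n-2k)! · 2ᵏ · k!) = a n k`;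
summing over `k` gives `t(n) = ∑ₖ a n k = Hₙ(1)`.
-/

open Finset
open scoped Nat

-- At `k = 0` the subtraction truncates to `0‼ = 1`, as intended.
def signlessHermiteCoeff (n k : ℕ) : ℕ := n.choose (2 * k) * (2 * k - 1)‼

theorem signlessHermiteCoeff_zero_right (n : ℕ) : signlessHermiteCoeff n 0 = 1 := by
  simp [signlessHermiteCoeff]

theorem signlessHermiteCoeff_eq_zero_of_lt {n k : ℕ} (h : n < 2 * k) :
    signlessHermiteCoeff n k = 0 := by
  rw [signlessHermiteCoeff, Nat.choose_eq_zero_of_lt h, zero_mul]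

theorem signlessHermiteCoeff_succ_succ (n k : ℕ) :
    signlessHermiteCoeff (n + 2) (k + 1) =
      signlessHermiteCoeff (n + 1) (k + 1) + (n + 1) * signlessHermiteCoeff n k := by
  have hodd : (2 * (k + 1) - 1)‼ = (2 * k + 1) * (2 * k - 1)‼ :=
    Nat.doubleFactorial_add_one (2 * k)
  have hchoose : (n + 1).choose (2 * k + 1) * (2 * k + 1) = (n + 1) * n.choose (2 * k) :=
    (Nat.add_one_mul_choose_eq n (2 * k)).symm
  rw [signlessHermiteCoeff, signlessHermiteCoeff, signlessHermiteCoeff, hodd,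
    show 2 * (k + 1) = 2 * k + 1 + 1 by ring, Nat.choose_succ_succ', ← mul_assoc (n + 1),
    ← hchoose]
  ring

theorem doubleFactorial_two_mul_sub_one_mul (k : ℕ) :
    (2 * k - 1)‼ * (2 ^ k * k !) = (2 * k)! := by
  cases k with
  | zero => rfl
  | succ j =>
    rw [← Nat.doubleFactorial_two_mul, show 2 * (j + 1) = 2 * j + 1 + 1 by ring,
      Nat.factorial_eq_mul_doubleFactorial, Nat.add_sub_cancel, mul_comm]

theorem signlessHermiteCoeff_mul_factorial {n k : ℕ} (h : 2 * k ≤ n) :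
    signlessHermiteCoeff n k * ((n - 2 * k)! * 2 ^ k * k !) = n ! := by
  rw [← Nat.choose_mul_factorial_mul_factorial h, ← doubleFactorial_two_mul_sub_one_mul,
    signlessHermiteCoeff]
  ring

theorem signlessHermiteCoeff_eq_factorial_div {K : Type*} [Field K] [CharZero K] {n k : ℕ}
    (h : 2 * k ≤ n) :
    (signlessHermiteCoeff n k : K) = n ! / ((n - 2 * k)! * 2 ^ k * k !) := by
  rw [eq_div_iff (by norm_cast; positivity)]
  exact_mod_cast signlessHermiteCoeff_mul_factorial h

section SignlessHermite

variable (R : Type*) [CommSemiring R]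

noncomputable def signlessHermite (n : ℕ) : R[X] :=
  ∑ k ∈ range (n / 2 + 1), (signlessHermiteCoeff n k : R[X]) * X ^ (n - 2 * k)

variable {R}

theorem signlessHermite_eq_sum_range {n N : ℕ} (hN : n < 2 * N) :
    signlessHermite R n =
      ∑ k ∈ range N, (signlessHermiteCoeff n k : R[X]) * X ^ (n - 2 * k) := by
  refine sum_subset (range_subset_range.mpr (by omega)) fun k hkN hk => ?_
  rw [signlessHermiteCoeff_eq_zero_of_lt (by simp at hkN hk; omega), Nat.cast_zero, zero_mul]

theorem signlessHermiteCoeff_mul_X_pow_mul_X (n k : ℕ) :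
    (signlessHermiteCoeff n k : R[X]) * X ^ (n - 2 * k) * X =
      (signlessHermiteCoeff n k : R[X]) * X ^ (n + 1 - 2 * k) := by
  rcases le_or_gt (2 * k) n with h | h
  · rw [mul_assoc, ← pow_succ, show n - 2 * k + 1 = n + 1 - 2 * k by omega]
  · simp [signlessHermiteCoeff_eq_zero_of_lt h]

theorem signlessHermite_zero : signlessHermite R 0 = 1 := by
  simp [signlessHermite, signlessHermiteCoeff_zero_right]

theorem signlessHermite_one : signlessHermite R 1 = X := by
  simp [signlessHermite, signlessHermiteCoeff_zero_right]

theorem signlessHermite_add_two (n : ℕ) :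
    signlessHermite R (n + 2) =
      X * signlessHermite R (n + 1) + ((n : R) + 1) • signlessHermite R n := by
  rw [signlessHermite_eq_sum_range (N := n + 3) (by omega),
    signlessHermite_eq_sum_range (N := n + 3) (by omega),
    signlessHermite_eq_sum_range (N := n + 2) (by omega),
    sum_range_succ' _ (n + 2), sum_range_succ' _ (n + 2), mul_add, mul_sum, smul_sum,
    add_right_comm, ← sum_add_distrib]
  congr 1
  · refine sum_congr rfl fun k _ => ?_
    rw [mul_comm X, signlessHermiteCoeff_mul_X_pow_mul_X, signlessHermiteCoeff_succ_succ,
      show n + 2 - 2 * (k + 1) = n - 2 * k by omega, smul_eq_C_mul]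
    simp only [map_add, map_natCast, map_one]
    push_cast
    ring
  · simp [signlessHermiteCoeff_zero_right, pow_succ']

theorem eq_signlessHermite_of_rec {H : ℕ → R[X]} (h0 : H 0 = 1) (h1 : H 1 = X)
    (hrec : ∀ n : ℕ, H (n + 2) = X * H (n + 1) + ((n : R) + 1) • H n) :
    H = signlessHermite R := by
  funext n
  induction n using Nat.twoStepInduction with
  | zero => rw [h0, signlessHermite_zero]
  | one => rw [h1, signlessHermite_one]
  | more n ih₀ ih₁ => rw [hrec, signlessHermite_add_two, ih₀, ih₁]

theorem signlessHermite_eval_one (n : ℕ) :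
    (signlessHermite R n).eval 1 = ∑ k ∈ range (n / 2 + 1), (signlessHermiteCoeff n k : R) := by
  simp [signlessHermite, eval_finsetSum]

end SignlessHermite

theorem signlessHermite_eq_sum_factorial_div (K : Type*) [Field K] [CharZero K] (n : ℕ) :
    signlessHermite K n = ∑ k ∈ range (n / 2 + 1),
      ((n ! : K) / ((n - 2 * k)! * 2 ^ k * k !)) • (X : K[X]) ^ (n - 2 * k) := by
  refine sum_congr rfl fun k hk => ?_
  rw [← signlessHermiteCoeff_eq_factorial_div (by simp at hk; omega), smul_eq_C_mul,
    map_natCast]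

namespace Equiv.Perm

variable {α : Type*} [Fintype α] [DecidableEq α]

theorem mul_self_eq_one_iff_cycleType_eq_replicate {σ : Perm α} :
    σ * σ = 1 ↔ σ.cycleType = Multiset.replicate σ.cycleType.card 2 := by
  rw [← pow_two, pow_prime_eq_one_iff, Multiset.eq_replicate_card]

theorem card_cycleType_le_of_mul_self_eq_one {σ : Perm α} (hσ : σ * σ = 1) :
    σ.cycleType.card ≤ Fintype.card α / 2 := by
  have hsum := σ.sum_cycleType_le
  rw [mul_self_eq_one_iff_cycleType_eq_replicate.mp hσ, Multiset.sum_replicate,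
    smul_eq_mul] at hsum
  omega

variable (α)

theorem card_cycleType_eq_replicate_two (k : ℕ) :
    #{σ : Perm α | σ.cycleType = Multiset.replicate k 2} =
      signlessHermiteCoeff (Fintype.card α) k := by
  rcases le_or_gt (2 * k) (Fintype.card α) with h | h
  · have hprod : ∏ m ∈ (Multiset.replicate k 2).toFinset,
        ((Multiset.replicate k 2).count m)! = k ! := by
      rw [Multiset.toFinset_replicate]
      split_ifs with hk
      · rw [hk, prod_empty, Nat.factorial_zero]
      · rw [prod_singleton, Multiset.count_replicate_self]
    have hcard := card_of_cycleType_mul_eq α (Multiset.replicate k 2)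
    rw [if_pos ⟨by simpa [mul_comm] using h, fun a ha => (Multiset.eq_of_mem_replicate ha).ge⟩,
      Multiset.sum_replicate, Multiset.prod_replicate, hprod, smul_eq_mul, mul_comm k 2] at hcard
    exact Nat.eq_of_mul_eq_mul_right (by positivity)
      (hcard.trans (signlessHermiteCoeff_mul_factorial h).symm)
  · rw [signlessHermiteCoeff_eq_zero_of_lt h, card_of_cycleType_eq_zero_iff]
    rintro ⟨hsum, -⟩
    rw [Multiset.sum_replicate, smul_eq_mul] at hsum
    omega

theorem card_mul_self_eq_one :
    #{σ : Perm α | σ * σ = 1} =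
      ∑ k ∈ range (Fintype.card α / 2 + 1), signlessHermiteCoeff (Fintype.card α) k := by
  rw [card_eq_sum_card_fiberwise (f := fun σ : Perm α => σ.cycleType.card)]
  · refine sum_congr rfl fun k _ => ?_
    rw [← card_cycleType_eq_replicate_two, filter_filter]
    congr 1
    ext σ
    simp only [mem_filter, mem_univ, true_and]
    rw [mul_self_eq_one_iff_cycleType_eq_replicate]
    constructor
    · rintro ⟨h, rfl⟩
      exact h
    · intro h
      simp [h]
  · intro σ hσ
    simpa [Nat.lt_add_one_iff] using card_cycleType_le_of_mul_self_eq_one (by simpa using hσ)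

end Equiv.Perm

theorem involCount_eq_eval_one (R : Type*) [CommSemiring R] (n : ℕ) :
    (involCount n : R) = (signlessHermite R n).eval 1 := by
  rw [signlessHermite_eval_one, involCount, Nat.card_eq_fintype_card, Fintype.card_subtype,
    Equiv.Perm.card_mul_self_eq_one, Fintype.card_fin, Nat.cast_sum]

/-- The matchings polynomials (signless Hermite polynomials) `H_n` defined by
`H_0 = 1`, `H_1 = X`, `H_{n+2} = X·H_{n+1} + (n+1)·H_n` have the explicit expansion
`H_n(x) = ∑_{k≤n/2} n!/((n-2k)!·2ᵏ·k!) · x^{n-2k}`, and `t(n) = H_n(1)`. -/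
theorem hermite_expansion_and_eval (H : ℕ → Polynomial ℚ)
    (h0 : H 0 = 1) (h1 : H 1 = X)
    (hrec : ∀ n : ℕ, H (n + 2) = X * H (n + 1) + ((n : ℚ) + 1) • H n) :
    ∀ n : ℕ,
      H n = ∑ k ∈ Finset.range (n / 2 + 1),
          ((Nat.factorial n : ℚ) /
            ((Nat.factorial (n - 2 * k) : ℚ) * 2 ^ k * (Nat.factorial k : ℚ))) •
              (X : Polynomial ℚ) ^ (n - 2 * k)
        ∧ (involCount n : ℚ) = (H n).eval 1 := by
  obtain rfl := eq_signlessHermite_of_rec h0 h1 hrec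
  exact fun n => ⟨signlessHermite_eq_sum_factorial_div ℚ n, involCount_eq_eval_one ℚ n⟩
end

section
/- For the sequence t of involution counts, the ratio t(n+1)/t(n) satisfies √n ≤ t(n+1)/t(n) ≤ √(n+1) + 1 for all n ≥ 1 (as an inequality of reals: t(n)·√n ≤ t(n+1) and t(n+1) ≤ t(n)·(√(n+1)+1)). -/
/-!
Writing `r n = t (n + 1) / t n`, the recurrence reads `r (n + 1) = 1 + (n + 1) / r n`, and the
two-sided bound `√(n + 1) ≤ r n ≤ √(n + 1) + 1` propagates itself: each half at `n + 1` follows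
from the other half at `n`, because `(√(n + 2) - 1) (√(n + 2) + 1) = n + 1`.
-/

open Real

namespace InvolCount

variable {t : ℕ → ℕ} (hrec : ∀ n : ℕ, t (n + 2) = t (n + 1) + (n + 1) * t n)
include hrec

theorem cast_rec (n : ℕ) : (t (n + 2) : ℝ) = t (n + 1) + ((n : ℝ) + 1) * t n := by
  rw [hrec n]
  push_cast
  ring

theorem lower_bound_succ_of_upper_bound {n : ℕ}
    (hup : (t (n + 1) : ℝ) ≤ (√((n : ℝ) + 1) + 1) * t n) :
    √((n : ℝ) + 2) * t (n + 1) ≤ t (n + 2) := by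
  have hs : 1 ≤ √((n : ℝ) + 2) := one_le_sqrt.mpr (by linarith [n.cast_nonneg (α := ℝ)])
  have hmono : √((n : ℝ) + 1) ≤ √((n : ℝ) + 2) := sqrt_le_sqrt (by linarith)
  have hsq : (√((n : ℝ) + 2) - 1) * (√((n : ℝ) + 2) + 1) = (n : ℝ) + 1 := by
    linear_combination sq_sqrt (by positivity : (0 : ℝ) ≤ n + 2)
  have : (√((n : ℝ) + 2) - 1) * t (n + 1) ≤ ((n : ℝ) + 1) * t n :=
    calc (√((n : ℝ) + 2) - 1) * t (n + 1)
        ≤ (√((n : ℝ) + 2) - 1) * ((√((n : ℝ) + 1) + 1) * t n) := by gcongr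
      _ ≤ (√((n : ℝ) + 2) - 1) * ((√((n : ℝ) + 2) + 1) * t n) := by gcongr
      _ = ((n : ℝ) + 1) * t n := by rw [← mul_assoc, hsq]
  rw [cast_rec hrec]
  linarith

theorem upper_bound_succ_of_lower_bound {n : ℕ}
    (hlow : √((n : ℝ) + 1) * t n ≤ t (n + 1)) :
    (t (n + 2) : ℝ) ≤ (√((n : ℝ) + 2) + 1) * t (n + 1) := by
  have hmono : √((n : ℝ) + 1) ≤ √((n : ℝ) + 2) := sqrt_le_sqrt (by linarith)
  have : ((n : ℝ) + 1) * t n ≤ √((n : ℝ) + 2) * t (n + 1) :=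
    calc ((n : ℝ) + 1) * t n = √((n : ℝ) + 1) * (√((n : ℝ) + 1) * t n) := by
          rw [← mul_assoc, mul_self_sqrt (by positivity)]
      _ ≤ √((n : ℝ) + 1) * t (n + 1) := by gcongr
      _ ≤ √((n : ℝ) + 2) * t (n + 1) := by gcongr
  rw [cast_rec hrec]
  linarith

theorem ratio_bounds (h10 : t 1 = t 0) (n : ℕ) :
    √((n : ℝ) + 1) * t n ≤ t (n + 1) ∧ (t (n + 1) : ℝ) ≤ (√((n : ℝ) + 1) + 1) * t n := by
  induction n with
  | zero =>
    simp [h10]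
    linarith [(t 0).cast_nonneg (α := ℝ)]
  | succ n ih =>
    push_cast
    rw [add_assoc, one_add_one_eq_two]
    exact ⟨lower_bound_succ_of_upper_bound hrec ih.2, upper_bound_succ_of_lower_bound hrec ih.1⟩

end InvolCount

theorem involCount_ratio_bounds (t : ℕ → ℕ)
    (h0 : t 0 = 1) (h1 : t 1 = 1)
    (hrec : ∀ n : ℕ, t (n + 2) = t (n + 1) + (n + 1) * t n) :
    ∀ n : ℕ, 1 ≤ n →
      (t n : ℝ) * Real.sqrt n ≤ (t (n + 1) : ℝ) ∧
      (t (n + 1) : ℝ) ≤ (t n : ℝ) * (Real.sqrt (n + 1) + 1) := by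
  intro n _
  obtain ⟨hlow, hup⟩ := InvolCount.ratio_bounds hrec (h1.trans h0.symm) n
  have hmono : √(n : ℝ) ≤ √((n : ℝ) + 1) := sqrt_le_sqrt (by linarith)
  constructor
  · calc (t n : ℝ) * √(n : ℝ) ≤ √((n : ℝ) + 1) * t n := by rw [mul_comm]; gcongr
      _ ≤ t (n + 1) := hlow
  · linarith
end

section
/- The involution counts satisfy the log-convexity inequality t(n)² ≤ t(n-1)·t(n+1) for all n ≥ 1. -/
/-!
Write `r n = t (n + 1) / t n`, so that `r (n + 1) = 1 + (n + 1) / r n`. Log-convexity says that `r`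
is nondecreasing. This is proved by induction together with the companion bound that `r n / (n + 1)`
is nonincreasing: the recurrence turns each of the two monotonicity statements at `n` into the
other one at `n + 1`. All inequalities are kept in cleared-denominator form over `ℕ`.
-/

namespace InvolutionRecurrence

variable {t : ℕ → ℕ}

theorem le_succ_succ (hrec : ∀ n : ℕ, t (n + 2) = t (n + 1) + (n + 1) * t n) (n : ℕ) :
    t (n + 1) ≤ t (n + 2) := by
  rw [hrec n]
  exact Nat.le_add_right _ _

/-- `t (n+1) t (n+3) - t (n+2)² = (n+2) t (n+1)² - (n+1) t n t (n+2)`, with both sides moved so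
that no subtraction occurs. -/
theorem cassini (hrec : ∀ n : ℕ, t (n + 2) = t (n + 1) + (n + 1) * t n) (n : ℕ) :
    t (n + 1) * t (n + 3) + (n + 1) * (t n * t (n + 2)) =
      t (n + 2) ^ 2 + (n + 2) * t (n + 1) ^ 2 := by
  rw [hrec (n + 1), hrec n]
  ring

theorem sq_le_mul_of_ratio_bound (hrec : ∀ n : ℕ, t (n + 2) = t (n + 1) + (n + 1) * t n)
    (n : ℕ) (h : (n + 1) * (t n * t (n + 2)) ≤ (n + 2) * t (n + 1) ^ 2) :
    t (n + 2) ^ 2 ≤ t (n + 1) * t (n + 3) := by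
  have := cassini hrec n
  omega

theorem ratio_bound_of_sq_le_mul (hrec : ∀ n : ℕ, t (n + 2) = t (n + 1) + (n + 1) * t n)
    (n : ℕ) (h : t (n + 1) ^ 2 ≤ t n * t (n + 2)) :
    (n + 2) * (t (n + 1) * t (n + 3)) ≤ (n + 3) * t (n + 2) ^ 2 := by
  set a := t (n + 1)
  set b := t (n + 2)
  have hb : b = a + (n + 1) * t n := hrec n
  have hc : t (n + 3) = b + (n + 2) * a := hrec (n + 1)
  have hab : a ≤ b := le_succ_succ hrec n
  have hb_sq : a * b + (n + 1) * a ^ 2 ≤ b ^ 2 :=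
    calc a * b + (n + 1) * a ^ 2
        ≤ a * b + (n + 1) * (t n * b) := by gcongr
      _ = b ^ 2 := by rw [sq, hb]; ring
  rw [hc]
  nlinarith [Nat.mul_le_mul_left a hab]

theorem sq_le_mul_and_ratio_bound (hrec : ∀ n : ℕ, t (n + 2) = t (n + 1) + (n + 1) * t n)
    (h_base : t 1 ^ 2 ≤ t 0 * t 2 ∧ t 0 * t 2 ≤ 2 * t 1 ^ 2) (n : ℕ) :
    t (n + 1) ^ 2 ≤ t n * t (n + 2) ∧
      (n + 1) * (t n * t (n + 2)) ≤ (n + 2) * t (n + 1) ^ 2 := by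
  induction n with
  | zero => simpa using h_base
  | succ n ih =>
    exact ⟨sq_le_mul_of_ratio_bound hrec n ih.2, ratio_bound_of_sq_le_mul hrec n ih.1⟩

end InvolutionRecurrence

theorem involCount_log_convex (t : ℕ → ℕ)
    (h0 : t 0 = 1) (h1 : t 1 = 1)
    (hrec : ∀ n : ℕ, t (n + 2) = t (n + 1) + (n + 1) * t n) :
    ∀ n : ℕ, 1 ≤ n → t n ^ 2 ≤ t (n - 1) * t (n + 1) := by
  have h_base : t 1 ^ 2 ≤ t 0 * t 2 ∧ t 0 * t 2 ≤ 2 * t 1 ^ 2 := by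
    simp [hrec 0, h0, h1]
  intro n hn
  obtain ⟨m, rfl⟩ := Nat.exists_eq_add_of_le' hn
  simpa using (InvolutionRecurrence.sq_le_mul_and_ratio_bound hrec h_base m).1
end
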